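/- For every integer n ≥ 1, Nice(n)/Nice(n−1) = 4^{1−n} (3n−1)^2 (2n)_{n−1}^2 / ((3n−2)^2 (n/2)_{n−1}^2), where Nice(n) = ∏_{1 ≤ i ≤ j ≤ k ≤ n} ((i+j+k−1)/(i+j+k−2))^2 and (x)_m denotes the rising factorial (Pochhammer symbol). -/

import Mathlib

/-!
Peeling off the layer `k = n` gives `Nice n / Nice (n-1) = (∏ⱼ ∏ᵢ (i+j+n-1)/(i+j+n-2))²`. The inner
product over `i` telescopes to `(2j+n-1)/(j+n-1)`, so the ratio is the square of
`∏_{j=1}^n (2j+n-1)/(j+n-1) = 2ⁿ ((n+1)/2)_n / (n)_n`. Legendre's duplication formula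
`(x)_{2m} = 4^m (x/2)_m ((x+1)/2)_m` at `x = n` turns this into the stated closed form.
-/

open Finset

/-- `Nice(n) = ∏_{1 ≤ i ≤ j ≤ k ≤ n} ((i+j+k-1)/(i+j+k-2))^2` (so `Nice 0 = 1`). -/
def Nice (n : ℕ) : ℚ :=
  ∏ k ∈ Finset.Icc 1 n, ∏ j ∈ Finset.Icc 1 k, ∏ i ∈ Finset.Icc 1 j,
    (((i : ℚ) + j + k - 1) / ((i : ℚ) + j + k - 2)) ^ 2

/-- The rising factorial (Pochhammer symbol) `(x)_m = x(x+1)⋯(x+m-1)` over ℚ. -/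
def risingFac (x : ℚ) (m : ℕ) : ℚ := ∏ i ∈ Finset.range m, (x + i)

section RisingFac

lemma risingFac_zero (x : ℚ) : risingFac x 0 = 1 := prod_range_zero _

lemma risingFac_succ (x : ℚ) (m : ℕ) : risingFac x (m + 1) = risingFac x m * (x + m) :=
  prod_range_succ _ _

lemma risingFac_pos {x : ℚ} (hx : 0 < x) (m : ℕ) : 0 < risingFac x m :=
  prod_pos fun _ _ => by positivity

lemma risingFac_add (x : ℚ) (a b : ℕ) :
    risingFac x (a + b) = risingFac x a * risingFac (x + a) b := by
  induction b with
  | zero => simp [risingFac_zero]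
  | succ b ih =>
    rw [← add_assoc, risingFac_succ, ih, risingFac_succ]
    push_cast
    ring

/-- Legendre's duplication formula for rising factorials. -/
lemma risingFac_half_mul_risingFac_half_add (x : ℚ) (m : ℕ) :
    risingFac (x / 2) m * risingFac ((x + 1) / 2) m * 4 ^ m = risingFac x (2 * m) := by
  induction m with
  | zero => simp [risingFac_zero]
  | succ m ih =>
    rw [mul_add_one, risingFac_succ, risingFac_succ, risingFac_succ, risingFac_succ, ← ih]
    push_cast
    ring

lemma prod_Icc_add_eq_risingFac (c : ℚ) (m : ℕ) :
    ∏ j ∈ Icc 1 m, ((j : ℚ) + c) = risingFac (c + 1) m := by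
  induction m with
  | zero => simp [risingFac_zero]
  | succ m ih =>
    rw [prod_Icc_succ_top (by omega), ih, risingFac_succ]
    push_cast
    ring

lemma prod_Icc_two_mul_add_eq_risingFac (c : ℚ) (m : ℕ) :
    ∏ j ∈ Icc 1 m, (2 * (j : ℚ) + c) = 2 ^ m * risingFac (c / 2 + 1) m := by
  have hfactor : ∀ j : ℕ, 2 * (j : ℚ) + c = 2 * ((j : ℚ) + c / 2) := fun j => by ring
  simp only [hfactor, prod_mul_distrib, prod_const, Nat.card_Icc, add_tsub_cancel_right,
    prod_Icc_add_eq_risingFac]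

end RisingFac

lemma prod_Icc_add_div_add_sub_one {c : ℚ} (hc : 0 < c) (j : ℕ) :
    ∏ i ∈ Icc 1 j, (((i : ℚ) + c) / ((i : ℚ) + c - 1)) = ((j : ℚ) + c) / c := by
  induction j with
  | zero => simp [hc.ne']
  | succ j ih =>
    have hjc : (j : ℚ) + c ≠ 0 := by positivity
    rw [prod_Icc_succ_top (by omega), ih]
    rw [Nat.cast_succ, add_right_comm, add_sub_cancel_right, mul_comm, div_mul_div_cancel₀ hjc]

lemma nice_pos (n : ℕ) : 0 < Nice n := by
  refine prod_pos fun k hk => prod_pos fun j hj => prod_pos fun i hi => ?_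
  have hijk : (3 : ℚ) ≤ i + j + k := by
    simp only [mem_Icc] at hi hj hk
    exact_mod_cast (by omega : 3 ≤ i + j + k)
  have hnum : 0 < (i : ℚ) + j + k - 1 := by linarith
  have hden : 0 < (i : ℚ) + j + k - 2 := by linarith
  positivity

lemma nice_succ (m : ℕ) :
    Nice (m + 1) = Nice m * ∏ j ∈ Icc 1 (m + 1), ((2 * (j : ℚ) + m) / ((j : ℚ) + m)) ^ 2 := by
  rw [Nice, prod_Icc_succ_top (by omega), ← Nice]
  refine congrArg _ (prod_congr rfl fun j hj => ?_)
  have hjm : (0 : ℚ) < j + m := by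
    have : (1 : ℚ) ≤ j := by exact_mod_cast (mem_Icc.mp hj).1
    positivity
  rw [prod_pow, show 2 * (j : ℚ) + m = j + (j + m) by ring,
    ← prod_Icc_add_div_add_sub_one hjm]
  congr 2 with i
  push_cast
  ring_nf

lemma nice_succ_div_nice (m : ℕ) :
    Nice (m + 1) / Nice m =
      (2 ^ (m + 1) * risingFac (((m : ℚ) + 1 + 1) / 2) (m + 1) /
        risingFac ((m : ℚ) + 1) (m + 1)) ^ 2 := by
  rw [nice_succ, mul_div_cancel_left₀ _ (nice_pos m).ne', prod_pow, prod_div_distrib,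
    prod_Icc_two_mul_add_eq_risingFac, prod_Icc_add_eq_risingFac]
  ring_nf

/-- The square root of the closed form, with `n = m + 1`. -/
lemma risingFac_ratio_eq (m : ℕ) :
    2 ^ (m + 1) * risingFac (((m : ℚ) + 1 + 1) / 2) (m + 1) / risingFac ((m : ℚ) + 1) (m + 1) =
      (3 * ((m : ℚ) + 1) - 1) * risingFac (2 * ((m : ℚ) + 1)) m /
        (2 ^ m * (3 * ((m : ℚ) + 1) - 2) * risingFac (((m : ℚ) + 1) / 2) m) := by
  set n : ℚ := (m : ℚ) + 1 with hn
  have hn1 : 1 ≤ n := by simp [hn]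
  have hdup := risingFac_half_mul_risingFac_half_add n m
  rw [show (4 : ℚ) ^ m = (2 ^ m) ^ 2 by rw [← pow_mul, mul_comm, pow_mul]; norm_num] at hdup
  have hsplit : risingFac n (m + 1) * risingFac (2 * n) m = risingFac n (2 * m) * (3 * n - 2) := by
    rw [show 2 * n = n + ((m + 1 : ℕ) : ℚ) by push_cast; ring, ← risingFac_add,
      show m + 1 + m = 2 * m + 1 by ring, risingFac_succ]
    push_cast
    ring
  have hlast : risingFac ((n + 1) / 2) (m + 1) = risingFac ((n + 1) / 2) m * ((3 * n - 1) / 2) := by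
    rw [risingFac_succ]
    ring
  have hden : 0 < risingFac n (m + 1) := risingFac_pos (by linarith) _
  have hhalf : 0 < risingFac (n / 2) m := risingFac_pos (by linarith) _
  have h3n : 0 < 3 * n - 2 := by linarith
  rw [div_eq_div_iff hden.ne' (by positivity), hlast]
  linear_combination (3 * n - 2) * (3 * n - 1) * hdup - (3 * n - 1) * hsplit

theorem nice_ratio_general (n : ℕ) :
    Nice n / Nice (n - 1) =
      (4 : ℚ) ^ ((1 : ℤ) - n) * (3 * (n : ℚ) - 1) ^ 2 * risingFac (2 * n) (n - 1) ^ 2 /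
        ((3 * (n : ℚ) - 2) ^ 2 * risingFac ((n : ℚ) / 2) (n - 1) ^ 2) := by
  rcases n with _ | m
  · norm_num [Nice, risingFac]
  have hpow : (4 : ℚ) ^ ((1 : ℤ) - (m + 1 : ℕ)) = (((2 : ℚ) ^ m) ^ 2)⁻¹ := by
    rw [show (1 : ℤ) - (m + 1 : ℕ) = -(m : ℤ) by push_cast; ring, zpow_neg, zpow_natCast,
      ← pow_mul, mul_comm, pow_mul]
    norm_num
  rw [Nat.add_sub_cancel, nice_succ_div_nice, risingFac_ratio_eq, hpow, Nat.cast_succ]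
  field_simp

/-- For every integer `n ≥ 1`,
`Nice(n)/Nice(n-1) = 4^{1-n} (3n-1)^2 (2n)_{n-1}^2 / ((3n-2)^2 (n/2)_{n-1}^2)`. -/
theorem nice_ratio (n : ℕ) (hn : 1 ≤ n) :
    Nice n / Nice (n - 1) =
      (4 : ℚ) ^ ((1 : ℤ) - n) * (3 * (n : ℚ) - 1) ^ 2 * risingFac (2 * n) (n - 1) ^ 2 /
        ((3 * (n : ℚ) - 2) ^ 2 * risingFac ((n : ℚ) / 2) (n - 1) ^ 2) :=
  nice_ratio_general n
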